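/- arXiv:1008.4713 — 3 statements merged into one kernel-verified Lean document; each statement's English description precedes it below -/
import Mathlib

section
/- For β ∈ (0,1), the function t ↦ sin(πβ) / (πβ(t² + 2t cos(πβ) + 1)) is a probability density on (0,∞). -/
open Real MeasureTheory Set Filter

lemma sq_add_two_mul_cos_add_one_pos {θ : ℝ} (hθ : sin θ ≠ 0) (t : ℝ) :
    0 < t ^ 2 + 2 * t * cos θ + 1 := by
  have h : t ^ 2 + 2 * t * cos θ + 1 = (t + cos θ) ^ 2 + sin θ ^ 2 := by
    linear_combination -sin_sq_add_cos_sq θ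
  rw [h]
  positivity

lemma arctan_cos_div_sin {θ : ℝ} (h₀ : 0 < θ) (hπ : θ < π) :
    arctan (cos θ / sin θ) = π / 2 - θ := by
  have h : cos θ / sin θ = tan (π / 2 - θ) := by
    rw [tan_eq_sin_div_cos, sin_pi_div_two_sub, cos_pi_div_two_sub]
  rw [h, arctan_tan] <;> linarith

lemma hasDerivAt_arctan_add_cos_div_sin {θ : ℝ} (hθ : sin θ ≠ 0) (t : ℝ) :
    HasDerivAt (fun t => arctan ((t + cos θ) / sin θ))
      (sin θ / (t ^ 2 + 2 * t * cos θ + 1)) t := by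
  have hlin : HasDerivAt (fun t => (t + cos θ) / sin θ) (1 / sin θ) t := by
    simpa using ((hasDerivAt_id t).add_const (cos θ)).div_const (sin θ)
  refine ((hasDerivAt_arctan _).comp t hlin).congr_deriv ?_
  have hD := sq_add_two_mul_cos_add_one_pos hθ t
  field_simp
  rw [eq_div_iff (by linarith)]
  linear_combination -sin_sq_add_cos_sq θ

/- The antiderivative `arctan ((t + cos θ) / sin θ)` runs from `π/2 - θ` at `t = 0`
to `π/2` at infinity. -/
theorem integral_Ioi_sin_div_sq_add_two_mul_cos_add_one {θ : ℝ} (h₀ : 0 < θ) (hπ : θ < π) :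
    ∫ t in Ioi (0 : ℝ), sin θ / (t ^ 2 + 2 * t * cos θ + 1) = θ := by
  have hs : 0 < sin θ := sin_pos_of_pos_of_lt_pi h₀ hπ
  have hderiv := hasDerivAt_arctan_add_cos_div_sin hs.ne'
  have hlim : Tendsto (fun t => arctan ((t + cos θ) / sin θ)) atTop (nhds (π / 2)) :=
    (tendsto_arctan_atTop.mono_right nhdsWithin_le_nhds).comp
      ((tendsto_atTop_add_const_right _ _ tendsto_id).atTop_div_const hs)
  rw [integral_Ioi_of_hasDerivAt_of_nonneg (hderiv 0).continuousAt.continuousWithinAt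
    (fun t _ => hderiv t)
    (fun t _ => div_nonneg hs.le (sq_add_two_mul_cos_add_one_pos hs.ne' t).le) hlim]
  simp only [zero_add, arctan_cos_div_sin h₀ hπ]
  ring

theorem stmt2 (β : ℝ) (hβ : β ∈ Ioo (0:ℝ) 1)
    (g : ℝ → ℝ)
    (hg : ∀ t : ℝ, g t =
      Real.sin (π * β) / (π * β * (t ^ 2 + 2 * t * Real.cos (π * β) + 1))) :
    (∀ t ∈ Ioi (0:ℝ), 0 ≤ g t) ∧ ∫ t in Ioi (0:ℝ), g t = 1 := by
  obtain ⟨hβ₀, hβ₁⟩ := hβ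
  have h₀ : 0 < π * β := by positivity
  have hπ : π * β < π := mul_lt_of_lt_one_right pi_pos hβ₁
  have hs : 0 < sin (π * β) := sin_pos_of_pos_of_lt_pi h₀ hπ
  have hg' : g = fun t => (π * β)⁻¹ * (sin (π * β) / (t ^ 2 + 2 * t * cos (π * β) + 1)) := by
    funext t
    rw [hg, mul_comm (π * β), ← div_div, div_eq_inv_mul]
  refine ⟨fun t _ => ?_, ?_⟩
  · rw [hg']
    have := sq_add_two_mul_cos_add_one_pos hs.ne' t
    positivity
  · rw [hg', integral_const_mul, integral_Ioi_sin_div_sq_add_two_mul_cos_add_one h₀ hπ,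
      inv_mul_cancel₀ h₀.ne']
end

section
/- The function x ↦ 1/E₂(x) on (0,∞), where E₂(x) = Σ_{n≥0} xⁿ/Γ(2n+1) = cosh(√x), is completely monotone: (-1)ⁿ (dⁿ/dxⁿ)(1/cosh(√x)) ≥ 0 for all n ≥ 0 and x > 0. -/
/-!
Euler's product for `sinh`, together with `sinh 2t = 2 sinh t cosh t`, gives
`cosh √x = ∏ₖ (1 + x / bₖ)` with `bₖ = ((2k+1)π/2)²`, so `1 / cosh √x` is the pointwise limit
of finite products of the functions `bₖ / (x + bₖ)`.

Fix a step `h > 0`. The functions on `(0, ∞)` whose iterated forward differences `Δₕⁿ f`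
alternate in sign contain each `bₖ / (x + bₖ)` and are closed under products
(`-Δ(fg) = f(· + h) (-Δg) + (-Δf) g`) and under pointwise limits. By the mean value theorem,
`Δₕⁿ f x = hⁿ f⁽ⁿ⁾(ξ)` for some `ξ ∈ [x, x + nh]`, so for smooth `f` this sign condition for
every `h > 0` is equivalent to complete monotonicity. Derivatives do not pass to pointwise
limits, which is why the argument goes through finite differences.
-/

open Real Set Filter Topology fwdDiff fwdDiff_aux
open scoped ContDiff

section ForwardDifference

variable {M G R : Type*} [AddCommMonoid M] [AddCommGroup G] [CommRing R]

lemma fwdDiff_iter_neg (h : M) (f : M → G) (n : ℕ) : (Δ_[h])^[n] (-f) = -(Δ_[h])^[n] f := by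
  simpa only [coe_fwdDiffₗ_pow] using map_neg (fwdDiffₗ M G h ^ n) f

lemma neg_fwdDiff_mul (h : M) (f g : M → R) :
    -Δ_[h] (f * g) = (fun y => f (y + h)) * -Δ_[h] g + -Δ_[h] f * g := by
  ext y
  simp only [fwdDiff, Pi.mul_apply, Pi.neg_apply, Pi.add_apply]
  ring

end ForwardDifference

def AltFwdDiffNonneg (h : ℝ) (f : ℝ → ℝ) : Prop :=
  ∀ (n : ℕ) (x : ℝ), 0 < x → 0 ≤ (-1) ^ n * (Δ_[h])^[n] f x

namespace AltFwdDiffNonneg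

variable {h : ℝ} {f g : ℝ → ℝ}

lemma nonneg (hf : AltFwdDiffNonneg h f) {x : ℝ} (hx : 0 < x) : 0 ≤ f x := by
  simpa using hf 0 x hx

lemma const {c : ℝ} (hc : 0 ≤ c) : AltFwdDiffNonneg h fun _ => c := by
  rintro (_ | n) x -
  · simpa using hc
  · simp [Function.iterate_succ_apply, Function.iterate_fixed (fwdDiff_const h (0 : ℝ))]

lemma comp_add_const (hf : AltFwdDiffNonneg h f) {c : ℝ} (hc : 0 ≤ c) :
    AltFwdDiffNonneg h fun y => f (y + c) := by
  intro n x hx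
  rw [fwdDiff_iter_comp_add]
  exact hf n (x + c) (by positivity)

lemma neg_fwdDiff (hf : AltFwdDiffNonneg h f) : AltFwdDiffNonneg h (-Δ_[h] f) := by
  intro n x hx
  have hsucc := hf (n + 1) x hx
  rw [fwdDiff_iter_neg, Pi.neg_apply, ← Function.iterate_succ_apply]
  rw [pow_succ] at hsucc
  linarith

lemma mul (hh : 0 ≤ h) (hf : AltFwdDiffNonneg h f) (hg : AltFwdDiffNonneg h g) :
    AltFwdDiffNonneg h (f * g) := by
  intro n
  -- `-Δ_[h]` preserves the class, so the induction can run over all pairs `(f, g)` at once.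
  induction n generalizing f g with
  | zero => exact fun x hx => by simpa using mul_nonneg (hf.nonneg hx) (hg.nonneg hx)
  | succ n ih =>
    intro x hx
    have hshift := ih (hf.comp_add_const hh) hg.neg_fwdDiff x hx
    have hdiff := ih hf.neg_fwdDiff hg x hx
    rw [Function.iterate_succ_apply, ← neg_neg (Δ_[h] (f * g)), neg_fwdDiff_mul,
      fwdDiff_iter_neg, fwdDiff_iter_add]
    simp only [Pi.neg_apply, Pi.add_apply, pow_succ]
    linarith

lemma finset_prod {ι : Type*} (s : Finset ι) {F : ι → ℝ → ℝ} (hh : 0 ≤ h)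
    (hF : ∀ i ∈ s, AltFwdDiffNonneg h (F i)) : AltFwdDiffNonneg h fun x => ∏ i ∈ s, F i x :=
  Finset.prod_fn s F ▸
    Finset.prod_induction F (AltFwdDiffNonneg h) (fun _ _ => mul hh) (const zero_le_one) hF

lemma tendsto_fwdDiff_iter {F : ℕ → ℝ → ℝ} (hh : 0 ≤ h)
    (hF : ∀ x, 0 < x → Tendsto (fun N => F N x) atTop (𝓝 (f x))) (n : ℕ) {x : ℝ} (hx : 0 < x) :
    Tendsto (fun N => (Δ_[h])^[n] (F N) x) atTop (𝓝 ((Δ_[h])^[n] f x)) := by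
  induction n generalizing x with
  | zero => exact hF x hx
  | succ n ih =>
    simp only [Function.iterate_succ_apply', fwdDiff]
    exact (ih (by positivity)).sub (ih hx)

lemma of_tendsto {F : ℕ → ℝ → ℝ} (hh : 0 ≤ h) (hF : ∀ N, AltFwdDiffNonneg h (F N))
    (hlim : ∀ x, 0 < x → Tendsto (fun N => F N x) atTop (𝓝 (f x))) : AltFwdDiffNonneg h f :=
  fun n x hx => ge_of_tendsto' ((tendsto_fwdDiff_iter hh hlim n hx).const_mul _)
    fun N => hF N n x hx

end AltFwdDiffNonneg

lemma hasDerivAt_fwdDiff_iter {f f' : ℝ → ℝ} (hf : ∀ y, 0 < y → HasDerivAt f (f' y) y)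
    {h : ℝ} (hh : 0 ≤ h) (n : ℕ) {x : ℝ} (hx : 0 < x) :
    HasDerivAt ((Δ_[h])^[n] f) ((Δ_[h])^[n] f' x) x := by
  induction n generalizing x with
  | zero => exact hf x hx
  | succ n ih =>
    simp only [Function.iterate_succ_apply', fwdDiff]
    exact ((ih (by positivity)).comp_add_const x h).sub (ih hx)

lemma exists_fwdDiff_iter_eq_pow_mul_iteratedDeriv {n : ℕ} {f : ℝ → ℝ}
    (hf : ContDiffOn ℝ n f (Ioi 0)) {h : ℝ} (hh : 0 < h) {x : ℝ} (hx : 0 < x) :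
    ∃ ξ ∈ Icc x (x + n * h), (Δ_[h])^[n] f x = h ^ n * iteratedDeriv n f ξ := by
  induction n generalizing f x with
  | zero => exact ⟨x, by simp, by simp⟩
  | succ n ih =>
    rw [Nat.cast_succ, contDiffOn_succ_iff_deriv_of_isOpen isOpen_Ioi] at hf
    have hderiv : ∀ y, 0 < y → HasDerivAt f (deriv f y) y := fun y hy =>
      (hf.1.differentiableAt (Ioi_mem_nhds hy)).hasDerivAt
    obtain ⟨c, hc, hslope⟩ :=
      exists_hasDerivAt_eq_slope ((Δ_[h])^[n] f) ((Δ_[h])^[n] (deriv f))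
        (lt_add_of_pos_right x hh)
        (fun y hy => (hasDerivAt_fwdDiff_iter hderiv hh.le n
          (hx.trans_le hy.1)).continuousAt.continuousWithinAt)
        (fun y hy => hasDerivAt_fwdDiff_iter hderiv hh.le n (hx.trans hy.1))
    obtain ⟨ξ, hξ, hξeq⟩ := ih hf.2.2 (hx.trans hc.1)
    refine ⟨ξ, ⟨hc.1.le.trans hξ.1, ?_⟩, ?_⟩
    · push_cast
      linarith [hξ.2, hc.2]
    · rw [Function.iterate_succ_apply', fwdDiff, iteratedDeriv_succ', pow_succ', mul_assoc,
        ← hξeq, hslope, add_sub_cancel_left, mul_div_cancel₀ _ hh.ne']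

lemma ContDiffOn.continuousAt_iteratedDeriv {n : ℕ} {f : ℝ → ℝ} {s : Set ℝ}
    (hf : ContDiffOn ℝ n f s) (hs : IsOpen s) {x : ℝ} (hx : x ∈ s) :
    ContinuousAt (iteratedDeriv n f) x :=
  ((hf.continuousOn_iteratedDerivWithin le_rfl hs.uniqueDiffOn).congr
    fun _ hy => (iteratedDerivWithin_of_isOpen hs hy).symm).continuousAt (hs.mem_nhds hx)

def CompletelyMonotone (f : ℝ → ℝ) : Prop :=
  ∀ (n : ℕ) (x : ℝ), 0 < x → 0 ≤ (-1) ^ n * iteratedDeriv n f x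

theorem completelyMonotone_iff_forall_altFwdDiffNonneg {f : ℝ → ℝ}
    (hf : ContDiffOn ℝ ∞ f (Ioi 0)) :
    CompletelyMonotone f ↔ ∀ h, 0 < h → AltFwdDiffNonneg h f := by
  have hfn (n : ℕ) : ContDiffOn ℝ n f (Ioi 0) := hf.of_le (by exact_mod_cast le_top)
  constructor
  · intro hcm h hh n x hx
    obtain ⟨ξ, hξ, hξeq⟩ := exists_fwdDiff_iter_eq_pow_mul_iteratedDeriv (hfn n) hh hx
    rw [hξeq, mul_left_comm]
    exact mul_nonneg (by positivity) (hcm n ξ (hx.trans_le hξ.1))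
  · intro hdiff n x hx
    by_contra! hneg
    obtain ⟨ε, hε, hball⟩ := Metric.eventually_nhds_iff.mp
      ((((hfn n).continuousAt_iteratedDeriv isOpen_Ioi hx).const_mul ((-1) ^ n)).eventually
        (gt_mem_nhds hneg))
    set h := ε / (n + 1) with h_def
    have hh : 0 < h := by positivity
    obtain ⟨ξ, hξ, hξeq⟩ := exists_fwdDiff_iter_eq_pow_mul_iteratedDeriv (hfn n) hh hx
    have hξε : dist ξ x < ε := by
      have hnh : n * h < ε := by
        rw [h_def, mul_div_assoc', div_lt_iff₀ (by positivity)]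
        linarith
      rw [Real.dist_eq, abs_of_nonneg (by linarith [hξ.1])]
      linarith [hξ.2]
    have hsign := hdiff h hh n x hx
    rw [hξeq, mul_left_comm] at hsign
    linarith [mul_neg_of_pos_of_neg (pow_pos hh n) (hball hξε)]

lemma completelyMonotone_inv_add {a : ℝ} (ha : 0 ≤ a) :
    CompletelyMonotone fun x => (x + a)⁻¹ := by
  intro n x hx
  have hform := congr_fun (iter_deriv_inv_linear n (1 : ℝ) a) x
  simp only [one_mul, one_pow, mul_one] at hform
  rw [iteratedDeriv_eq_iterate, hform, ← mul_assoc, ← mul_assoc, ← mul_pow]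
  norm_num
  positivity

lemma contDiffOn_inv_add {a : ℝ} (ha : 0 ≤ a) :
    ContDiffOn ℝ ∞ (fun x => (x + a)⁻¹) (Ioi 0) :=
  (contDiffOn_id.add contDiffOn_const).inv fun x (hx : 0 < x) => by positivity

lemma contDiffOn_one_div_cosh_sqrt : ContDiffOn ℝ ∞ (fun y => 1 / cosh √y) (Ioi 0) :=
  contDiffOn_const.div (contDiff_cosh.comp_contDiffOn fun y (hy : 0 < y) =>
    (contDiffAt_sqrt hy.ne').contDiffWithinAt) fun _ _ => (cosh_pos _).ne'

theorem Real.tendsto_euler_sinh_prod (t : ℝ) :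
    Tendsto (fun n : ℕ => t * ∏ j ∈ Finset.range n, (1 + t ^ 2 / ((j + 1) * π) ^ 2)) atTop
      (𝓝 (sinh t)) := by
  have hπ : (π : ℂ) ≠ 0 := Complex.ofReal_ne_zero.mpr pi_ne_zero
  have hsin := Complex.tendsto_euler_sin_prod (t * Complex.I / π)
  rw [mul_div_cancel₀ _ hπ, Complex.sin_mul_I, ← Complex.ofReal_sinh] at hsin
  convert (Complex.continuous_im.tendsto _).comp hsin using 1
  · ext n
    have hfactor (j : ℕ) : (1 - (t * Complex.I / π) ^ 2 / ((j : ℂ) + 1) ^ 2) =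
        ((1 + t ^ 2 / ((j + 1) * π) ^ 2 : ℝ) : ℂ) := by
      push_cast
      rw [div_pow, mul_pow, Complex.I_sq, div_div, ← mul_pow, mul_comm (π : ℂ)]
      ring
    rw [Function.comp_apply, Finset.prod_congr rfl fun j _ => hfactor j, ← Complex.ofReal_prod,
      mul_right_comm, ← Complex.ofReal_mul, Complex.mul_I_im, Complex.ofReal_re]
  · simp [Complex.sinh_ofReal_re]

lemma Real.prod_sinh_factor_two_mul (t : ℝ) (n : ℕ) :
    ∏ j ∈ Finset.range (2 * n), (1 + (2 * t) ^ 2 / ((j + 1) * π) ^ 2) =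
      (∏ j ∈ Finset.range n, (1 + t ^ 2 / ((j + 1) * π) ^ 2)) *
        ∏ k ∈ Finset.range n, (1 + t ^ 2 / ((2 * k + 1) * π / 2) ^ 2) := by
  induction n with
  | zero => simp
  | succ n ih =>
    rw [mul_add_one, Finset.prod_range_succ, Finset.prod_range_succ, ih, Finset.prod_range_succ,
      Finset.prod_range_succ]
    have hodd : (2 * t) ^ 2 / ((2 * n + 1) * π) ^ 2 = t ^ 2 / ((2 * n + 1) * π / 2) ^ 2 := by
      field_simp
    have heven : (2 * t) ^ 2 / ((2 * n + 1 + 1) * π) ^ 2 = t ^ 2 / ((n + 1) * π) ^ 2 := by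
      field_simp
      ring
    push_cast
    rw [hodd, heven]
    ring

theorem Real.tendsto_euler_cosh_prod (t : ℝ) :
    Tendsto (fun n : ℕ => ∏ k ∈ Finset.range n, (1 + t ^ 2 / ((2 * k + 1) * π / 2) ^ 2)) atTop
      (𝓝 (cosh t)) := by
  rcases eq_or_ne t 0 with rfl | ht
  · simp
  have hsinh : sinh t ≠ 0 := sinh_ne_zero.mpr ht
  have hlim := ((tendsto_euler_sinh_prod (2 * t)).comp
    (tendsto_id.const_mul_atTop' two_pos)).div ((tendsto_euler_sinh_prod t).const_mul 2)
      (mul_ne_zero two_ne_zero hsinh)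
  rw [sinh_two_mul, mul_assoc, mul_div_mul_left _ _ two_ne_zero, mul_div_cancel_left₀ _ hsinh]
    at hlim
  refine hlim.congr fun n => ?_
  have hpos : 0 < ∏ j ∈ Finset.range n, (1 + t ^ 2 / ((j + 1) * π) ^ 2) :=
    Finset.prod_pos fun j _ => by positivity
  rw [Pi.div_apply, Function.comp_apply, id, prod_sinh_factor_two_mul,
    div_eq_iff (mul_ne_zero two_ne_zero (mul_ne_zero ht hpos.ne'))]
  ring

lemma tendsto_prod_mul_inv_add_one_div_cosh_sqrt {x : ℝ} (hx : 0 ≤ x) :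
    Tendsto (fun n : ℕ => ∏ k ∈ Finset.range n,
      ((2 * k + 1) * π / 2) ^ 2 * (x + ((2 * k + 1) * π / 2) ^ 2)⁻¹) atTop
      (𝓝 (1 / cosh √x)) := by
  rw [one_div]
  refine ((tendsto_euler_cosh_prod √x).inv₀ (cosh_pos _).ne').congr fun n => ?_
  rw [← Finset.prod_inv_distrib, sq_sqrt hx]
  refine Finset.prod_congr rfl fun k _ => ?_
  have hb : 0 < ((2 * k + 1) * π / 2) ^ 2 := by positivity
  field_simp
  ring

/-- `x ↦ 1/E₂(x) = 1/cosh(√x)` is completely monotone on `(0,∞)`. -/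
theorem stmt7 :
    ∀ (n : ℕ) (x : ℝ), 0 < x →
      0 ≤ (-1 : ℝ) ^ n *
        iteratedDeriv n (fun y : ℝ => 1 / Real.cosh (Real.sqrt y)) x := by
  refine (completelyMonotone_iff_forall_altFwdDiffNonneg contDiffOn_one_div_cosh_sqrt).2
    fun h hh => AltFwdDiffNonneg.of_tendsto hh.le (fun N => ?_)
      fun x hx => tendsto_prod_mul_inv_add_one_div_cosh_sqrt hx.le
  refine AltFwdDiffNonneg.finset_prod _ hh.le fun k _ => ?_
  have hb : 0 ≤ ((2 * k + 1) * π / 2) ^ 2 := by positivity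
  have hinv : AltFwdDiffNonneg h fun x => (x + ((2 * k + 1) * π / 2) ^ 2)⁻¹ :=
    (completelyMonotone_iff_forall_altFwdDiffNonneg (contDiffOn_inv_add hb)).1
      (completelyMonotone_inv_add hb) h hh
  exact (AltFwdDiffNonneg.const hb).mul hh.le hinv
end

section
/- For α ∈ (1,2), the improper integral ∫₀¹ (y^{α-2} - 1)/(1-y)^α dy converges and equals 1/(α-1). -/
/-!
For `1 < α < 2`, `F y = (y ^ (α - 1) - 1) / ((α - 1) * (1 - y) ^ (α - 1))` is a primitive of the
integrand on `(0, 1)`. The integrand is nonnegative, so a fundamental theorem of calculus for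
nonnegative derivatives gives integrability together with `∫ = F (1⁻) - F (0⁺)`. Here
`F (0⁺) = -1 / (α - 1)` because `α > 1`, and `F (1⁻) = 0` because `y ^ (α - 1) - 1 ∼ (α - 1) (y - 1)`
turns `F y` into `-(1 - y) ^ (2 - α) (1 + o(1))` and `α < 2`.
-/

open Real MeasureTheory Set Filter Topology

section
variable {g g' : ℝ → ℝ} {a b ga gb : ℝ}

theorem integrableOn_Ioo_deriv_of_nonneg_of_tendsto (hab : a < b)
    (hderiv : ∀ x ∈ Ioo a b, HasDerivAt g (g' x) x) (hpos : ∀ x ∈ Ioo a b, 0 ≤ g' x)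
    (ha : Tendsto g (𝓝[>] a) (𝓝 ga)) (hb : Tendsto g (𝓝[<] b) (𝓝 gb)) :
    IntegrableOn g' (Ioo a b) := by
  set G : ℝ → ℝ := Function.update (Function.update g a ga) b gb
  have hG : EqOn G g (Ioo a b) := fun x hx => by
    simp only [G, Function.update_of_ne hx.2.ne, Function.update_of_ne hx.1.ne']
  have hGderiv : ∀ x ∈ Ioo a b, HasDerivAt G (g' x) x := fun x hx =>
    (hderiv x hx).congr_of_eventuallyEq (eventuallyEq_of_mem (Ioo_mem_nhds hx.1 hx.2) hG)
  have hGcont : ContinuousOn G (Icc a b) := by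
    rw [continuousOn_update_iff, continuousOn_update_iff, Icc_sdiff_right, Ico_sdiff_left]
    refine ⟨⟨fun x hx => (hderiv x hx).continuousAt.continuousWithinAt,
      fun _ => ha.mono_left (nhdsWithin_mono _ Ioo_subset_Ioi_self)⟩, fun _ => ?_⟩
    refine (hb.congr' ?_).mono_left (nhdsWithin_mono _ Ico_subset_Iio_self)
    filter_upwards [Ioo_mem_nhdsLT hab] with x hx using (Function.update_of_ne hx.1.ne' _ _).symm
  exact (intervalIntegral.integrableOn_deriv_of_nonneg hGcont hGderiv hpos).mono_set
    Ioo_subset_Ioc_self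

theorem integral_Ioo_eq_sub_of_hasDerivAt_of_nonneg (hab : a < b)
    (hderiv : ∀ x ∈ Ioo a b, HasDerivAt g (g' x) x) (hpos : ∀ x ∈ Ioo a b, 0 ≤ g' x)
    (ha : Tendsto g (𝓝[>] a) (𝓝 ga)) (hb : Tendsto g (𝓝[<] b) (𝓝 gb)) :
    ∫ x in Ioo a b, g' x = gb - ga := by
  have hint := integrableOn_Ioo_deriv_of_nonneg_of_tendsto hab hderiv hpos ha hb
  rw [← integral_Ioc_eq_integral_Ioo, ← intervalIntegral.integral_of_le hab.le]
  exact intervalIntegral.integral_eq_sub_of_hasDerivAt_of_tendsto hab hderiv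
    ((intervalIntegrable_iff_integrableOn_Ioo_of_le hab.le).2 hint) ha hb

end

theorem tendsto_rpow_sub_one_div_sub_one (p : ℝ) :
    Tendsto (fun y : ℝ => (y ^ p - 1) / (y - 1)) (𝓝[≠] 1) (𝓝 p) := by
  have hd := hasDerivAt_rpow_const (x := (1:ℝ)) (p := p) (Or.inl one_ne_zero)
  rw [one_rpow, mul_one] at hd
  refine (hasDerivAt_iff_tendsto_slope.mp hd).congr' ?_
  filter_upwards [self_mem_nhdsWithin] with x hx
  simp [slope_def_field]

noncomputable def integrandPrimitive (α y : ℝ) : ℝ :=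
  (y ^ (α - 1) - 1) / ((α - 1) * (1 - y) ^ (α - 1))

section
variable {α y : ℝ}

theorem hasDerivAt_integrandPrimitive (hα : α ≠ 1) (hy : y ∈ Ioo 0 1) :
    HasDerivAt (integrandPrimitive α) ((y ^ (α - 2) - 1) / (1 - y) ^ α) y := by
  obtain ⟨hy0, hy1⟩ := hy
  have h1y : 0 < 1 - y := by linarith
  have hα' : α - 1 ≠ 0 := sub_ne_zero.2 hα
  have hnum : HasDerivAt (fun y : ℝ => y ^ (α - 1) - 1) ((α - 1) * y ^ (α - 2)) y := by
    refine ((hasDerivAt_rpow_const (p := α - 1) (Or.inl hy0.ne')).sub_const 1).congr_deriv ?_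
    ring_nf
  have hden : HasDerivAt (fun y : ℝ => (α - 1) * (1 - y) ^ (α - 1))
      ((α - 1) * ((α - 1) * (1 - y) ^ (α - 2) * -1)) y := by
    refine ((((hasDerivAt_id' y).const_sub 1).rpow_const (p := α - 1)
      (Or.inl h1y.ne')).const_mul (α - 1)).congr_deriv ?_
    ring_nf
  refine (hnum.div hden (mul_ne_zero hα' (rpow_pos_of_pos h1y _).ne')).congr_deriv ?_
  have e1 : (1 - y) ^ (α - 1) = (1 - y) ^ (α - 2) * (1 - y) := by
    rw [← rpow_add_one h1y.ne']; ring_nf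
  have e2 : (1 - y) ^ α = (1 - y) ^ (α - 2) * (1 - y) * (1 - y) := by
    rw [← rpow_add_one h1y.ne', ← rpow_add_one h1y.ne']; ring_nf
  have e3 : y ^ (α - 1) = y ^ (α - 2) * y := by
    rw [← rpow_add_one hy0.ne']; ring_nf
  have hB : (1 - y) ^ (α - 2) ≠ 0 := (rpow_pos_of_pos h1y _).ne'
  rw [e1, e2, e3]
  field_simp
  ring

theorem integrand_nonneg (hα : α ≤ 2) (hy : y ∈ Ioo 0 1) :
    0 ≤ (y ^ (α - 2) - 1) / (1 - y) ^ α := by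
  have h1 : 1 ≤ y ^ (α - 2) := one_le_rpow_of_pos_of_le_one_of_nonpos hy.1 hy.2.le (by linarith)
  exact div_nonneg (by linarith) (rpow_nonneg (by linarith [hy.2]) _)

theorem tendsto_integrandPrimitive_zero (hα : 1 < α) :
    Tendsto (integrandPrimitive α) (𝓝[>] 0) (𝓝 (-(1 / (α - 1)))) := by
  have hc : ContinuousAt (integrandPrimitive α) 0 := by
    refine ((continuousAt_rpow_const _ _ (Or.inr (by linarith))).sub continuousAt_const).div
      (continuousAt_const.mul ((continuousAt_rpow_const _ _ (Or.inl (by norm_num))).comp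
        (continuous_const.sub continuous_id).continuousAt)) ?_
    rw [sub_zero, one_rpow, mul_one]
    exact sub_ne_zero.2 hα.ne'
  have h0 : integrandPrimitive α 0 = -(1 / (α - 1)) := by
    simp [integrandPrimitive, zero_rpow (sub_ne_zero.2 hα.ne'), neg_div]
  rw [← h0]
  exact hc.tendsto.mono_left nhdsWithin_le_nhds

theorem tendsto_integrandPrimitive_one (hα : α < 2) :
    Tendsto (integrandPrimitive α) (𝓝[<] 1) (𝓝 0) := by
  have hpow : Tendsto (fun y : ℝ => (1 - y) ^ (2 - α)) (𝓝[<] 1) (𝓝 0) := by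
    have h : Tendsto (fun y : ℝ => 1 - y) (𝓝[<] 1) (𝓝 0) :=
      ((continuous_const.sub continuous_id).tendsto' (1:ℝ) 0 (sub_self 1)).mono_left
        nhdsWithin_le_nhds
    simpa [Function.comp_def, zero_rpow (sub_ne_zero.2 hα.ne')] using
      ((continuousAt_rpow_const 0 (2 - α) (Or.inr (by linarith))).tendsto.comp h)
  have hslope := (tendsto_rpow_sub_one_div_sub_one (α - 1)).mono_left
    (nhdsWithin_mono _ fun _ => ne_of_lt)
  have hlim := ((hpow.mul hslope).div_const (α - 1)).neg
  rw [zero_mul, zero_div, neg_zero] at hlim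
  refine hlim.congr' ?_
  filter_upwards [self_mem_nhdsWithin] with y (hy : y < 1)
  have h1y : 0 < 1 - y := by linarith
  have hsplit : (1 - y) ^ (α - 1) = (1 - y) / (1 - y) ^ (2 - α) := by
    rw [show α - 1 = 1 - (2 - α) by ring, rpow_sub h1y, rpow_one]
  have hy1 : y - 1 ≠ 0 := by linarith
  have hB : (1 - y) ^ (2 - α) ≠ 0 := (rpow_pos_of_pos h1y _).ne'
  rw [integrandPrimitive, hsplit]
  field_simp
  ring

end

theorem stmt9 (α : ℝ) (hα : α ∈ Ioo (1:ℝ) 2) :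
    IntegrableOn (fun y : ℝ => (y ^ (α - 2) - 1) / (1 - y) ^ α) (Ioo 0 1) ∧
    ∫ y in Ioo (0:ℝ) 1, (y ^ (α - 2) - 1) / (1 - y) ^ α = 1 / (α - 1) := by
  obtain ⟨hα1, hα2⟩ := hα
  have hderiv := fun y (hy : y ∈ Ioo (0:ℝ) 1) => hasDerivAt_integrandPrimitive hα1.ne' hy
  have hpos := fun y (hy : y ∈ Ioo (0:ℝ) 1) => integrand_nonneg hα2.le hy
  have h0 := tendsto_integrandPrimitive_zero hα1
  have h1 := tendsto_integrandPrimitive_one hα2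
  refine ⟨integrableOn_Ioo_deriv_of_nonneg_of_tendsto zero_lt_one hderiv hpos h0 h1, ?_⟩
  rw [integral_Ioo_eq_sub_of_hasDerivAt_of_nonneg zero_lt_one hderiv hpos h0 h1]
  ring
end
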